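/- arXiv:cs/0609160 — 2 statements merged into one kernel-verified Lean document; each statement's English description precedes it below -/
import Mathlib

section
/- If z_t = x_m^{d} (a pure power of the smallest variable), then a monomial z_i is a product z_j z_k with j, k ≥ t if and only if deg(z_i) ≥ 2d, where indices refer to the graded lexicographic enumeration of monomials. -/
open Finset

/-- total degree of an exponent vector -/
def deg {m : ℕ} (a : Fin m → ℕ) : ℕ := ∑ l, a l

/-- strict graded lexicographic order (x_1 largest, i.e. index 0 most significant) -/
def glexLT {m : ℕ} (a b : Fin m → ℕ) : Prop :=
  deg a < deg b ∨ (deg a = deg b ∧ Pi.Lex (· < ·) (@fun _ => (· < ·)) a b)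

def glexLE {m : ℕ} (a b : Fin m → ℕ) : Prop := glexLT a b ∨ a = b

lemma deg_add {m : ℕ} (a b : Fin m → ℕ) : deg (a + b) = deg a + deg b := by
  simp [deg, Finset.sum_add_distrib]

lemma deg_pure (m d : ℕ) (hm : 1 ≤ m) :
    deg (fun l : Fin m => if l = ⟨m - 1, Nat.sub_lt hm Nat.one_pos⟩ then d else 0) = d := by
  simp [deg]

lemma deg_le_of_glexLE {m : ℕ} {a b : Fin m → ℕ} (h : glexLE a b) : deg a ≤ deg b := by
  rcases h with (h | h) | rfl
  · omega
  · omega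
  · exact le_rfl

lemma exists_sub (m : ℕ) : ∀ k (a : Fin m → ℕ), k ≤ deg a →
    ∃ u : Fin m → ℕ, (∀ i, u i ≤ a i) ∧ deg u = k := by
  intro k
  induction k with
  | zero => exact fun a _ => ⟨0, fun i => Nat.zero_le _, by simp [deg]⟩
  | succ n ih =>
    intro a h
    obtain ⟨u, hu, hdu⟩ := ih a (Nat.le_of_succ_le h)
    have hlt : deg u < deg a := by omega
    have : ∃ i, u i < a i := by
      by_contra hc
      push_neg at hc
      have : deg a ≤ deg u := Finset.sum_le_sum (fun i _ => hc i)
      omega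
    obtain ⟨i, hi⟩ := this
    refine ⟨u + Pi.single i 1, fun j => ?_, ?_⟩
    · rcases eq_or_ne j i with rfl | hji
      · simpa using hi
      · simp [Pi.single_eq_of_ne hji, hu j]
    · rw [deg_add, hdu]
      simp [deg]

lemma glexLE_pure {m d : ℕ} (hm : 1 ≤ m) (w : Fin m → ℕ) (h : d ≤ deg w) :
    glexLE (fun l : Fin m => if l = ⟨m - 1, Nat.sub_lt hm Nat.one_pos⟩ then d else 0) w := by
  set a : Fin m → ℕ := fun l : Fin m => if l = ⟨m - 1, Nat.sub_lt hm Nat.one_pos⟩ then d else 0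
    with ha
  have hda : deg a = d := deg_pure m d hm
  rcases lt_or_eq_of_le h with hlt | heq
  · exact Or.inl (Or.inl (by omega))
  · by_cases hw : a = w
    · exact Or.inr hw
    · refine Or.inl (Or.inr ⟨by omega, ?_⟩)
      have hne : ∃ i, a i ≠ w i := Function.ne_iff.mp hw
      set s : Finset (Fin m) := Finset.univ.filter (fun i => a i ≠ w i) with hs
      have hsne : s.Nonempty := by
        obtain ⟨i, hi⟩ := hne
        exact ⟨i, by simp [hs, hi]⟩
      set i := s.min' hsne with hidef
      have hi : a i ≠ w i := by
        have := s.min'_mem hsne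
        simpa [hs] using this
      have hjlt : ∀ j, j < i → a j = w j := by
        intro j hj
        by_contra hc
        have : i ≤ j := s.min'_le j (by simp [hs, hc])
        omega
      refine ⟨i, hjlt, ?_⟩
      -- show a i < w i
      by_cases hlast : i = (⟨m - 1, Nat.sub_lt hm Nat.one_pos⟩ : Fin m)
      · -- all earlier coords equal, contradiction with equal degrees
        exfalso
        have hall : ∀ j, j ≠ i → a j = w j := by
          intro j hj
          rcases lt_or_gt_of_ne hj with hjl | hjg
          · exact hjlt j hjl
          · exfalso
            have : (j : ℕ) < m - 1 + 1 := j.isLt.trans_le (by omega)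
            have hji : (i : ℕ) < (j : ℕ) := hjg
            rw [hlast] at hji
            simp at hji
            omega
        have : deg a = deg w := by
          apply Finset.sum_congr rfl
          intro j _
          rcases eq_or_ne j i with rfl | hj
          ·
            exfalso
            have h1 : deg a = a i + ∑ j ∈ Finset.univ.erase i, a j := by
              rw [deg, ← Finset.add_sum_erase _ _ (Finset.mem_univ i)]
            have h2 : deg w = w i + ∑ j ∈ Finset.univ.erase i, w j := by
              rw [deg, ← Finset.add_sum_erase _ _ (Finset.mem_univ i)]
            have h3 : ∑ j ∈ Finset.univ.erase i, a j = ∑ j ∈ Finset.univ.erase i, w j := by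
              apply Finset.sum_congr rfl
              intro j hj
              exact hall j (Finset.ne_of_mem_erase hj)
            have : a i = w i := by omega
            exact hi this
          · exact hall j hj
        exact hi (by
          have h1 : deg a = a i + ∑ j ∈ Finset.univ.erase i, a j := by
            rw [deg, ← Finset.add_sum_erase _ _ (Finset.mem_univ i)]
          have h2 : deg w = w i + ∑ j ∈ Finset.univ.erase i, w j := by
            rw [deg, ← Finset.add_sum_erase _ _ (Finset.mem_univ i)]
          have h3 : ∑ j ∈ Finset.univ.erase i, a j = ∑ j ∈ Finset.univ.erase i, w j := by
            apply Finset.sum_congr rfl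
            intro j hj
            exact hall j (Finset.ne_of_mem_erase hj)
          omega)
      · have hai : a i = 0 := by simp [ha, hlast]
        have : w i ≠ 0 := by
          intro h0
          exact hi (by rw [hai, h0])
        omega

theorem stmt6 (m d : ℕ) (hm : 1 ≤ m) :
    ∀ z : Fin m → ℕ,
      (∃ u v : Fin m → ℕ,
          glexLE (fun l : Fin m => if l = ⟨m - 1, Nat.sub_lt hm Nat.one_pos⟩ then d else 0) u ∧
          glexLE (fun l : Fin m => if l = ⟨m - 1, Nat.sub_lt hm Nat.one_pos⟩ then d else 0) v ∧
          z = u + v)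
      ↔ 2 * d ≤ deg z := by
  intro z
  constructor
  · rintro ⟨u, v, hu, hv, rfl⟩
    have h1 := deg_le_of_glexLE hu
    have h2 := deg_le_of_glexLE hv
    rw [deg_pure m d hm] at h1 h2
    rw [deg_add]
    omega
  · intro h
    obtain ⟨u, hule, hud⟩ := exists_sub m d z (by omega)
    refine ⟨u, fun i => z i - u i, glexLE_pure hm u (by omega), ?_, ?_⟩
    · apply glexLE_pure hm
      have : deg (fun i => z i - u i) = deg z - deg u := by
        rw [deg, deg, deg, ← Finset.sum_tsub_distrib]
        exact fun i _ => hule i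
      omega
    · funext i
      have := hule i
      simp [Pi.add_apply]
      omega
end

section
/- Let a ∈ ℕ^m with m ≥ 2 and a not a pure power of x_m. The number of monomials of degree exactly 2|a|+1 expressible as z_j z_k with j, k ≥ t (where z_t has exponent vector a) equals ∑_{k=1}^{m} C(2|a| - ∑_{l=1}^{k} a_l + m - k, m-k). -/
open Finset

namespace Stmt9Aux


/-- greedy fill lemma -/
lemma fill {α : Type*} [DecidableEq α] (s : Finset α) (f : α → ℕ) :
    ∀ n, n ≤ ∑ i ∈ s, f i →
      ∃ g : α → ℕ, (∀ i, g i ≤ f i) ∧ (∀ i ∉ s, g i = 0) ∧ ∑ i ∈ s, g i = n := by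
  induction s using Finset.induction_on with
  | empty =>
      intro n hn
      simp only [Finset.sum_empty, Nat.le_zero] at hn
      exact ⟨fun _ => 0, fun _ => Nat.zero_le _, fun _ _ => rfl, by simp [hn]⟩
  | insert _ _ hx ih =>
      rename_i x s
      intro n hn
      rw [Finset.sum_insert hx] at hn
      obtain ⟨g, hg1, hg2, hg3⟩ := ih (n - min n (f x)) (by omega)
      refine ⟨Function.update g x (min n (f x)), ?_, ?_, ?_⟩
      · intro i
        rcases eq_or_ne i x with rfl | h
        · simp only [Function.update_self]; omega
        · rw [Function.update_of_ne h]; exact hg1 i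
      · intro i hi
        simp only [Finset.mem_insert, not_or] at hi
        rw [Function.update_of_ne hi.1]
        exact hg2 i hi.2
      · rw [Finset.sum_insert hx, Function.update_self,
          Finset.sum_congr rfl
            (fun i hi => Function.update_of_ne (ne_of_mem_of_not_mem hi hx) _ _),
          hg3]
        omega

/-- stars and bars -/
lemma card_tuple (p r : ℕ) :
    (Finset.Nat.antidiagonalTuple p r).card = (p + r - 1).choose r := by
  classical
  have e : {x // x ∈ Finset.Nat.antidiagonalTuple p r} ≃ Sym (Fin p) r := by
    refine (Equiv.subtypeEquivRight fun x => Finset.Nat.mem_antidiagonalTuple).trans ?_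
    refine ⟨fun f => ⟨∑ i, Multiset.replicate (f.1 i) i, ?_⟩,
           fun s => ⟨fun i => s.1.count i, ?_⟩, ?_, ?_⟩
    · rw [Multiset.card_sum]
      simpa using f.2
    · rw [Multiset.sum_count_eq_card (fun x _ => Finset.mem_univ x)]
      exact s.2
    · intro f
      apply Subtype.ext
      funext i
      simp [Multiset.count_sum', Multiset.count_replicate]
    · intro s
      apply Subtype.ext
      show ∑ i, Multiset.replicate (s.1.count i) i = s.1
      rw [← Finset.sum_subset (Finset.subset_univ s.1.toFinset)
        (fun x _ hx => by
          rw [Multiset.count_eq_zero_of_notMem (by simpa using hx),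
            Multiset.replicate_zero])]
      rw [Finset.sum_congr rfl
        (fun x _ => (Multiset.nsmul_singleton x (s.1.count x)).symm)]
      exact Multiset.toFinset_sum_count_nsmul_eq s.1
  rw [← Fintype.card_coe, Fintype.card_congr e, Sym.card_sym_eq_choose, Fintype.card_fin]

/-- extension of a tuple to ℕ by zero -/
def E {n : ℕ} (f : Fin n → ℕ) (i : ℕ) : ℕ := if h : i < n then f ⟨i, h⟩ else 0

lemma E_lt {n : ℕ} (f : Fin n → ℕ) {i : ℕ} (h : i < n) : E f i = f ⟨i, h⟩ := dif_pos h

lemma E_val {n : ℕ} (f : Fin n → ℕ) (l : Fin n) : E f l.val = f l := by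
  rw [E_lt f l.isLt]

lemma sum_univ_E {n : ℕ} (f : Fin n → ℕ) : ∑ l, f l = ∑ i ∈ Finset.range n, E f i := by
  rw [← Fin.sum_univ_eq_sum_range (E f) n]
  exact Finset.sum_congr rfl fun l _ => (E_val f l).symm

lemma sum_filter_lt {n : ℕ} (f : Fin n → ℕ) {t : ℕ} (ht : t ≤ n) :
    ∑ l ∈ Finset.univ.filter (fun l : Fin n => l.val < t), f l
      = ∑ i ∈ Finset.range t, E f i := by
  rw [Finset.sum_filter, sum_univ_E (fun l : Fin n => if l.val < t then f l else 0)]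
  have h1 : ∀ i ∈ Finset.range n,
      E (fun l : Fin n => if l.val < t then f l else 0) i = if i < t then E f i else 0 := by
    intro i hi
    have hi' : i < n := Finset.mem_range.mp hi
    rw [E_lt _ hi', E]
    split_ifs <;> rfl
  rw [Finset.sum_congr rfl h1, ← Finset.sum_filter]
  congr 1
  ext i
  simp only [Finset.mem_filter, Finset.mem_range]
  omega

lemma range_split {k n : ℕ} (hk : k < n) (g : ℕ → ℕ) :
    ∑ i ∈ Finset.range n, g i =
      ∑ i ∈ Finset.range k, g i + g k + ∑ i ∈ Finset.range (n - (k + 1)), g (k + 1 + i) := by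
  rw [← Finset.sum_range_add_sum_Ico g (by omega : k + 1 ≤ n), Finset.sum_range_succ,
    Finset.sum_Ico_eq_sum_range]

lemma deg_le_of_glexLE {m : ℕ} {a u : Fin m → ℕ} (h : glexLE a u) : deg a ≤ deg u := by
  rcases h with (h | rfl)
  · rcases h with h | ⟨h, -⟩
    · exact le_of_lt h
    · exact le_of_eq h
  · exact le_refl _

lemma key_lt {m : ℕ} {a u v b : Fin m → ℕ} (hu : glexLE a u) (hdu : deg u = deg a)
    (hb : b = u + v) (k : Fin m) (hpre : ∀ l, l < k → b l = a l) (hlt : b k < a k) : False := by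
  have hbk : b k = u k + v k := by rw [hb]; rfl
  rcases hu with (hu | rfl)
  · rcases hu with h | ⟨-, hlex⟩
    · omega
    · obtain ⟨j, hj1, hj2⟩ := hlex
      rcases lt_trichotomy j k with hjk | rfl | hjk
      · have h1 := hpre j hjk
        have h2 : b j = u j + v j := by rw [hb]; rfl
        omega
      · omega
      · have h1 : a k = u k := hj1 k hjk
        omega
  · omega

lemma exists_middle {m : ℕ} (a b : Fin m → ℕ) (hdb : deg b = 2 * deg a + 1)
    (k : Fin m) (hpre : ∀ l, l < k → b l = a l) (hk : a k < b k) :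
    ∃ u : Fin m → ℕ, (∀ l, u l ≤ b l) ∧ glexLE a u ∧ deg u = deg a := by
  by_cases hA : ∀ l, k < l → a l = 0
  · refine ⟨a, fun l => ?_, Or.inr rfl, rfl⟩
    rcases lt_trichotomy l k with h | rfl | h
    · exact le_of_eq (hpre l h).symm
    · omega
    · rw [hA l h]; exact Nat.zero_le _
  · push_neg at hA
    obtain ⟨j, hjk, hj0⟩ := hA
    have hkm : k.val < m := k.isLt
    set kv := k.val with hkv
    set q := m - (kv + 1) with hq
    have hble : ∀ l : Fin m, l.val < kv → b l = a l := fun l hl =>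
      hpre l (by rw [Fin.lt_def]; exact hl)
    have hXab : ∀ i ∈ Finset.range kv, E b i = E a i := by
      intro i hi
      have hi' : i < kv := Finset.mem_range.mp hi
      have him : i < m := by omega
      rw [E_lt b him, E_lt a him]
      exact hble ⟨i, him⟩ hi'
    set Xa := ∑ i ∈ Finset.range kv, E a i with hXa
    set Ya := ∑ i ∈ Finset.range q, E a (kv + 1 + i) with hYa
    set Yb := ∑ i ∈ Finset.range q, E b (kv + 1 + i) with hYb
    have hsa : deg a = Xa + E a kv + Ya := by
      rw [deg, sum_univ_E a, range_split hkm]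
    have hsb : deg b = Xa + E b kv + Yb := by
      rw [deg, sum_univ_E b, range_split hkm, Finset.sum_congr rfl hXab]
    have hEak : E a kv = a k := E_val a k
    have hEbk : E b kv = b k := E_val b k
    have hYa1 : 1 ≤ Ya := by
      have hjm : j.val < m := j.isLt
      have hjkv : kv < j.val := hjk
      have hidx : j.val - kv - 1 ∈ Finset.range q := by
        rw [Finset.mem_range]; omega
      have hle : E a (kv + 1 + (j.val - kv - 1)) ≤ Ya :=
        Finset.single_le_sum (f := fun i => E a (kv + 1 + i)) (fun i _ => Nat.zero_le _) hidx
      have heq : kv + 1 + (j.val - kv - 1) = j.val := by omega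
      rw [heq, E_val a j] at hle
      omega
    classical
    set c : Fin m → ℕ := fun l => if l = k then b k - (a k + 1) else b l with hc
    set s : Finset (Fin m) := Finset.univ.filter (fun l : Fin m => ¬ l.val < kv) with hs
    have hcsplit := Finset.sum_filter_add_sum_filter_not Finset.univ
      (fun l : Fin m => l.val < kv) c
    rw [← hs] at hcsplit
    have hcE : ∀ i (him : i < m), i ≠ kv → E c i = E b i := by
      intro i him hik
      rw [E_lt c him, E_lt b him, hc]
      have hne : (⟨i, him⟩ : Fin m) ≠ k := by
        intro h
        exact hik (congrArg Fin.val h)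
      simp [hne]
    have hclow : ∑ l ∈ Finset.univ.filter (fun l : Fin m => l.val < kv), c l = Xa := by
      rw [sum_filter_lt c (by omega)]
      rw [Finset.sum_congr rfl (fun i hi => hcE i (by have := Finset.mem_range.mp hi; omega)
        (by have := Finset.mem_range.mp hi; omega))]
      exact Finset.sum_congr rfl hXab
    have hcall : ∑ l, c l = Xa + (b k - (a k + 1)) + Yb := by
      rw [sum_univ_E c, range_split hkm]
      congr 1
      · congr 1
        · rw [Finset.sum_congr rfl (fun i hi => hcE i (by have := Finset.mem_range.mp hi; omega)
            (by have := Finset.mem_range.mp hi; omega))]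
          exact Finset.sum_congr rfl hXab
        · rw [E_lt c hkm, hc]
          have heqk : (⟨kv, hkm⟩ : Fin m) = k := Fin.ext rfl
          simp [heqk]
      · refine Finset.sum_congr rfl fun i hi => ?_
        have hi' : i < q := Finset.mem_range.mp hi
        exact hcE _ (by omega) (by omega)
    have hcap : Ya - 1 ≤ ∑ l ∈ s, c l := by omega
    obtain ⟨g, hg1, hg2, hg3⟩ := fill s c (Ya - 1) hcap
    set u : Fin m → ℕ := fun l =>
      if l.val < kv then a l else if l.val = kv then a k + 1 + g k else g l with hu
    have hgb : ∀ l : Fin m, ¬ l.val < kv → l.val ≠ kv → g l ≤ b l := by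
      intro l h1 h2
      have h3 := hg1 l
      rw [hc] at h3
      have hne : l ≠ k := by
        intro hh
        exact h2 (congrArg Fin.val hh)
      simpa [hne] using h3
    have hgk : g k ≤ b k - (a k + 1) := by
      have h3 := hg1 k
      rw [hc] at h3
      simpa using h3
    have hgout : ∀ i ∈ Finset.range kv, E g i = 0 := by
      intro i hi
      have hi' : i < kv := Finset.mem_range.mp hi
      have him : i < m := by omega
      rw [E_lt g him]
      exact hg2 _ (by simp [hs, hi'])
    have hEgk : E g kv = g k := by
      rw [E_lt g hkm]
    have hgsum : ∑ l ∈ s, g l = g k + ∑ i ∈ Finset.range q, E g (kv + 1 + i) := by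
      have h1 := Finset.sum_filter_add_sum_filter_not Finset.univ
        (fun l : Fin m => l.val < kv) g
      rw [← hs] at h1
      have h2 : ∑ l ∈ Finset.univ.filter (fun l : Fin m => l.val < kv), g l = 0 := by
        rw [sum_filter_lt g (by omega), Finset.sum_congr rfl hgout]
        simp
      have h3 : ∑ l, g l = ∑ i ∈ Finset.range kv, E g i + E g kv
          + ∑ i ∈ Finset.range q, E g (kv + 1 + i) := by
        rw [sum_univ_E g, range_split hkm]
      have h4 : ∑ i ∈ Finset.range kv, E g i = 0 := by
        rw [Finset.sum_congr rfl hgout]; simp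
      omega
    have hdu : deg u = deg a := by
      have h1 : ∀ i ∈ Finset.range kv, E u i = E a i := by
        intro i hi
        have hi' : i < kv := Finset.mem_range.mp hi
        have him : i < m := by omega
        rw [E_lt u him, E_lt a him, hu]
        simp only [hi', if_pos]
      have h2 : E u kv = a k + 1 + g k := by
        rw [E_lt u hkm, hu]
        simp
      have h3 : ∀ i ∈ Finset.range q, E u (kv + 1 + i) = E g (kv + 1 + i) := by
        intro i hi
        have hi' : i < q := Finset.mem_range.mp hi
        have him : kv + 1 + i < m := by omega
        rw [E_lt u him, E_lt g him, hu]
        have e1 : ¬ (kv + 1 + i < kv) := by omega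
        have e2 : ¬ (kv + 1 + i = kv) := by omega
        simp only [e1, e2, if_false]
      have h4 : deg u = Xa + (a k + 1 + g k) + ∑ i ∈ Finset.range q, E g (kv + 1 + i) := by
        rw [deg, sum_univ_E u, range_split hkm, Finset.sum_congr rfl h1, h2,
          Finset.sum_congr rfl h3]
      omega
    refine ⟨u, ?_, Or.inl (Or.inr ⟨hdu.symm, ⟨k, fun l hl => ?_, ?_⟩⟩), hdu⟩
    · intro l
      rw [hu]
      dsimp only
      split_ifs with h1 h2
      · exact le_of_eq (hble l h1).symm
      · have hlk : l = k := Fin.ext h2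
        rw [hlk]
        omega
      · exact hgb l h1 h2
    · have hl' : l.val < kv := hl
      rw [hu]
      dsimp only
      rw [if_pos hl']
    · rw [hu]
      dsimp only
      rw [if_neg (lt_irrefl kv), if_pos rfl]
      omega
lemma char {m : ℕ} (a b : Fin m → ℕ) (hdb : deg b = 2 * deg a + 1) :
    (∃ u v : Fin m → ℕ, glexLE a u ∧ glexLE a v ∧ b = u + v) ↔
      ∃ k : Fin m, (∀ l, l < k → b l = a l) ∧ a k < b k := by
  constructor
  · rintro ⟨u, v, hu, hv, hb⟩
    have hne : b ≠ a := by
      intro h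
      rw [h] at hdb
      omega
    have hFne : (Finset.univ.filter (fun l : Fin m => b l ≠ a l)).Nonempty := by
      obtain ⟨l, hl⟩ := Function.ne_iff.mp hne
      exact ⟨l, by simp [hl]⟩
    set k := Finset.min' _ hFne with hkdef
    have hkmem : b k ≠ a k := by
      have h := Finset.min'_mem _ hFne
      simp only [Finset.mem_filter, Finset.mem_univ, true_and] at h
      exact h
    have hpre : ∀ l, l < k → b l = a l := by
      intro l hl
      by_contra h
      have hle : k ≤ l := Finset.min'_le _ _ (by simp [h])
      exact absurd hl (not_lt.mpr hle)
    refine ⟨k, hpre, ?_⟩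
    rcases Nat.lt_or_ge (a k) (b k) with h | h
    · exact h
    have hlt : b k < a k := by omega
    have hdu := deg_le_of_glexLE hu
    have hdv := deg_le_of_glexLE hv
    have hsum : deg b = deg u + deg v := by
      rw [hb, deg, deg, deg, ← Finset.sum_add_distrib]
      rfl
    have hcase : deg u = deg a ∨ deg v = deg a := by omega
    rcases hcase with hd | hd
    · exact (key_lt hu hd hb k hpre hlt).elim
    · exact (key_lt hv hd (by rw [hb, add_comm]) k hpre hlt).elim
  · rintro ⟨k, hpre, hk⟩
    obtain ⟨u, hub, hau, hdu⟩ := exists_middle a b hdb k hpre hk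
    refine ⟨u, fun l => b l - u l, hau, Or.inl (Or.inl ?_), funext fun l => ?_⟩
    · have hsum : deg u + deg (fun l => b l - u l) = deg b := by
        rw [deg, deg, deg, ← Finset.sum_add_distrib]
        exact Finset.sum_congr rfl fun l _ => by have := hub l; omega
      omega
    · have := hub l
      show b l = u l + (b l - u l)
      omega

lemma card_filter_eq {m : ℕ} (a : Fin m → ℕ) (k : Fin m) :
    ((Finset.Nat.antidiagonalTuple m (2 * deg a + 1)).filter
        (fun b => (∀ l, l < k → b l = a l) ∧ a k < b k)).card =
      (2 * deg a - (∑ l ∈ Finset.univ.filter (fun l : Fin m => l.val ≤ k.val), a l)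
          + (m - (k.val + 1))).choose (m - (k.val + 1)) := by
  classical
  have hkm : k.val < m := k.isLt
  set kv := k.val with hkv
  set q := m - (kv + 1) with hq
  set Xa := ∑ i ∈ Finset.range kv, E a i with hXa
  set Ya := ∑ i ∈ Finset.range q, E a (kv + 1 + i) with hYa
  have hsa : deg a = Xa + E a kv + Ya := by rw [deg, sum_univ_E a, range_split hkm]
  have hEak : E a kv = a k := E_val a k
  have hSle : ∑ l ∈ Finset.univ.filter (fun l : Fin m => l.val ≤ kv), a l = Xa + E a kv := by
    have h0 : (Finset.univ.filter (fun l : Fin m => l.val ≤ kv))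
        = Finset.univ.filter (fun l : Fin m => l.val < kv + 1) := by
      ext l
      simp [Nat.lt_succ_iff]
    rw [h0, sum_filter_lt a (by omega), Finset.sum_range_succ]
  set r := 2 * deg a - (Xa + E a kv) with hr
  have hcard : ((Finset.Nat.antidiagonalTuple m (2 * deg a + 1)).filter
        (fun b => (∀ l, l < k → b l = a l) ∧ a k < b k)).card
      = (Finset.Nat.antidiagonalTuple (q + 1) r).card := by
    apply Finset.card_bij'
      (i := fun b _ => (fun j : Fin (q + 1) =>
        if j.val = 0 then b k - (a k + 1) else E b (kv + j.val)))
      (j := fun c _ => (fun l : Fin m =>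
        if l.val < kv then a l else if l.val = kv then a k + 1 + E c 0 else E c (l.val - kv)))
    · -- maps into target
      intro b hb
      rw [Finset.mem_filter, Finset.Nat.mem_antidiagonalTuple] at hb
      obtain ⟨hbA, hpre, hk⟩ := hb
      have hble : ∀ l : Fin m, l.val < kv → b l = a l := fun l hl =>
        hpre l (by rw [Fin.lt_def]; exact hl)
      rw [Finset.Nat.mem_antidiagonalTuple]
      have h1 : ∑ j : Fin (q + 1), (if (j : ℕ) = 0 then b k - (a k + 1) else E b (kv + j.val))
          = ∑ i ∈ Finset.range q, E b (kv + 1 + i) + (b k - (a k + 1)) := by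
        rw [sum_univ_E (fun j : Fin (q + 1) =>
          if (j : ℕ) = 0 then b k - (a k + 1) else E b (kv + j.val))]
        rw [Finset.sum_range_succ']
        congr 1
        · refine Finset.sum_congr rfl fun i hi => ?_
          have hi' : i < q := Finset.mem_range.mp hi
          rw [E_lt _ (by omega : i + 1 < q + 1)]
          simp only [Nat.succ_ne_zero, if_false]
          congr 1
          omega
      rw [h1]
      have hXb : ∑ i ∈ Finset.range kv, E b i = Xa := by
        refine Finset.sum_congr rfl fun i hi => ?_
        have hi' : i < kv := Finset.mem_range.mp hi
        have him : i < m := by omega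
        rw [E_lt b him, E_lt a him]
        exact hble ⟨i, him⟩ hi'
      have hsb : ∑ l, b l = ∑ i ∈ Finset.range kv, E b i + E b kv
          + ∑ i ∈ Finset.range q, E b (kv + 1 + i) := by
        rw [sum_univ_E b, range_split hkm]
      have hEbk : E b kv = b k := E_val b k
      omega
    · -- maps back
      intro c hc
      rw [Finset.Nat.mem_antidiagonalTuple] at hc
      rw [Finset.mem_filter, Finset.Nat.mem_antidiagonalTuple]
      have hcsum : E c 0 + ∑ i ∈ Finset.range q, E c (i + 1) = r := by
        rw [← hc, sum_univ_E c, Finset.sum_range_succ']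
        omega
      refine ⟨?_, fun l hl => ?_, ?_⟩
      · have h1 : ∑ l : Fin m, (if l.val < kv then a l
            else if l.val = kv then a k + 1 + E c 0 else E c (l.val - kv))
            = Xa + (a k + 1 + E c 0) + ∑ i ∈ Finset.range q, E c (i + 1) := by
          rw [sum_univ_E (fun l : Fin m => if l.val < kv then a l
            else if l.val = kv then a k + 1 + E c 0 else E c (l.val - kv)),
            range_split hkm]
          congr 1
          · congr 1
            · refine Finset.sum_congr rfl fun i hi => ?_
              have hi' : i < kv := Finset.mem_range.mp hi
              have him : i < m := by omega
              rw [E_lt _ him, E_lt a him]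
              simp only [hi', if_pos]
            · rw [E_lt _ hkm]
              simp
          · refine Finset.sum_congr rfl fun i hi => ?_
            have hi' : i < q := Finset.mem_range.mp hi
            have him : kv + 1 + i < m := by omega
            rw [E_lt _ him]
            have e1 : ¬ (kv + 1 + i < kv) := by omega
            have e2 : ¬ (kv + 1 + i = kv) := by omega
            simp only [e1, e2, if_false]
            congr 1
            omega
        rw [h1]
        omega
      · have hl' : l.val < kv := hl
        simp only [hl', if_pos]
      · simp only [lt_irrefl, if_false, if_pos]
        rw [if_neg (show ¬ (k.val < kv) from lt_irrefl _), if_pos (show k.val = kv from rfl)]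
        omega
    · -- left inverse
      intro b hb
      rw [Finset.mem_filter, Finset.Nat.mem_antidiagonalTuple] at hb
      obtain ⟨hbA, hpre, hk⟩ := hb
      funext l
      rcases lt_trichotomy l.val kv with h | h | h
      · rw [if_pos h]
        exact (hpre l (by rw [Fin.lt_def]; exact h)).symm
      · have hlk : l = k := Fin.ext h
        rw [if_neg (by omega), if_pos h]
        have h0 : E (fun j : Fin (q + 1) =>
            if (j : ℕ) = 0 then b k - (a k + 1) else E b (kv + j.val)) 0
            = b k - (a k + 1) := by
          rw [E_lt _ (by omega : 0 < q + 1)]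
          exact if_pos rfl
        rw [h0, hlk]
        omega
      · rw [if_neg (by omega), if_neg (by omega)]
        have hlq : l.val - kv < q + 1 := by have := l.isLt; omega
        rw [E_lt _ hlq]
        simp only [if_neg (by omega : ¬ (l.val - kv = 0))]
        have heq : kv + (l.val - kv) = l.val := by omega
        rw [heq, E_val]
    · -- right inverse
      intro c hc
      funext j
      dsimp only
      rcases Nat.eq_zero_or_pos j.val with h | h
      · rw [if_pos h]
        have h1 : ¬ (k.val < kv) := by omega
        have h2 : k.val = kv := rfl
        rw [if_neg h1, if_pos h2, E_lt _ (by omega : 0 < q + 1)]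
        have : (⟨0, by omega⟩ : Fin (q + 1)) = j := Fin.ext h.symm
        rw [this]
        omega
      · rw [if_neg (by omega)]
        have hjm : kv + j.val < m := by have := j.isLt; omega
        rw [E_lt _ hjm]
        have e1 : ¬ (kv + j.val < kv) := by omega
        have e2 : ¬ (kv + j.val = kv) := by omega
        simp only [e1, e2, if_false]
        have heq : kv + j.val - kv = j.val := by omega
        rw [heq, E_val]
  rw [hSle, ← hr, hcard, card_tuple]
  have h2 : q + 1 + r - 1 = r + q := by
    rw [Nat.add_right_comm, Nat.add_sub_cancel, Nat.add_comm]
  rw [h2, ← Nat.choose_symm (Nat.le_add_right r q)]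
  congr 1
  exact Nat.add_sub_cancel_left r q
end Stmt9Aux

open Stmt9Aux in
theorem stmt9 (m : ℕ) (hm : 2 ≤ m) (a : Fin m → ℕ)
    (ha : ∃ l : Fin m, l.val < m - 1 ∧ 0 < a l) :
    Set.ncard {b : Fin m → ℕ | deg b = 2 * deg a + 1 ∧
        ∃ u v : Fin m → ℕ, glexLE a u ∧ glexLE a v ∧ b = u + v} =
      ∑ k ∈ Finset.range m,
        Nat.choose (2 * deg a - (∑ l ∈ Finset.univ.filter (fun l : Fin m => l.val ≤ k), a l)
            + (m - (k + 1))) (m - (k + 1)) := by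
  classical
  have hset : {b : Fin m → ℕ | deg b = 2 * deg a + 1 ∧
        ∃ u v : Fin m → ℕ, glexLE a u ∧ glexLE a v ∧ b = u + v}
      = ↑((Finset.Nat.antidiagonalTuple m (2 * deg a + 1)).filter
          (fun b => ∃ k : Fin m, (∀ l, l < k → b l = a l) ∧ a k < b k)) := by
    ext b
    simp only [Set.mem_setOf_eq, Finset.coe_filter, Finset.Nat.mem_antidiagonalTuple, deg]
    constructor
    · rintro ⟨hdb, hC⟩
      exact ⟨hdb, (char a b hdb).mp hC⟩
    · rintro ⟨hdb, hC⟩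
      exact ⟨hdb, (char a b hdb).mpr hC⟩
  rw [hset, Set.ncard_coe_finset]
  have hdisj : ∀ k ∈ (Finset.univ : Finset (Fin m)), ∀ k' ∈ (Finset.univ : Finset (Fin m)),
      k ≠ k' → Disjoint
        ((Finset.Nat.antidiagonalTuple m (2 * deg a + 1)).filter
          (fun b => (∀ l, l < k → b l = a l) ∧ a k < b k))
        ((Finset.Nat.antidiagonalTuple m (2 * deg a + 1)).filter
          (fun b => (∀ l, l < k' → b l = a l) ∧ a k' < b k')) := by
    intro k _ k' _ hne
    rw [Finset.disjoint_left]
    intro b hb hb'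
    rw [Finset.mem_filter] at hb hb'
    obtain ⟨-, hpre, hk⟩ := hb
    obtain ⟨-, hpre', hk'⟩ := hb'
    rcases lt_or_gt_of_ne hne with h | h
    · have h1 := hpre' k h
      omega
    · have h1 := hpre k' h
      omega
  have hunion : (Finset.Nat.antidiagonalTuple m (2 * deg a + 1)).filter
      (fun b => ∃ k : Fin m, (∀ l, l < k → b l = a l) ∧ a k < b k)
      = Finset.univ.biUnion (fun k : Fin m =>
          (Finset.Nat.antidiagonalTuple m (2 * deg a + 1)).filter
            (fun b => (∀ l, l < k → b l = a l) ∧ a k < b k)) := by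
    ext b
    simp only [Finset.mem_filter, Finset.mem_biUnion, Finset.mem_univ, true_and]
    tauto
  rw [hunion, Finset.card_biUnion hdisj,
    ← Fin.sum_univ_eq_sum_range (fun kn =>
      (2 * deg a - (∑ l ∈ Finset.univ.filter (fun l : Fin m => l.val ≤ kn), a l)
        + (m - (kn + 1))).choose (m - (kn + 1))) m]
  exact Finset.sum_congr rfl fun k _ => card_filter_eq a k
end
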